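/- arXiv:2411.10394 — 2 statements merged into one kernel-verified Lean document; each statement's English description precedes it below -/
import Mathlib

section
/- Let C and C' be matrices in T^{n×n} supported on DAGs G and G' on the common node set [n], with weights w and w'. If Q(C) = Q(C') as subsets of ℝ^n/ℝ𝟙, then C^♭ = (C')^♭; in particular the weighted transitive reductions coincide, G^♭_w = (G')^♭_{w'}, and the weights w^♭ and (w')^♭ agree on this common graph. -/
open scoped Classical
noncomputable section

/-- The min-plus tropical semiring `T = ℝ ∪ {∞}` with `⊕ = min` and `⊙ = +`. -/
abbrev Trop : Type := WithTop ℝ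

/-- Min-plus identity matrix: `0` on the diagonal, `∞` off the diagonal. -/
def mpId {n : ℕ} : Matrix (Fin n) (Fin n) Trop := fun i j => if i = j then 0 else ⊤

/-- Min-plus matrix product. -/
def mpMul {n : ℕ} (A B : Matrix (Fin n) (Fin n) Trop) : Matrix (Fin n) (Fin n) Trop :=
  fun i j => Finset.univ.inf fun k => A i k + B k j

/-- Entrywise minimum (tropical sum) of matrices. -/
def mpAdd {n : ℕ} (A B : Matrix (Fin n) (Fin n) Trop) : Matrix (Fin n) (Fin n) Trop :=
  fun i j => A i j ⊓ B i j

/-- Min-plus matrix power. -/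
def mpPow {n : ℕ} (A : Matrix (Fin n) (Fin n) Trop) : ℕ → Matrix (Fin n) (Fin n) Trop
  | 0 => mpId
  | k + 1 => mpMul (mpPow A k) A

/-- Kleene star `A* = I ⊕ A ⊕ A^{⊙2} ⊕ ⋯ ⊕ A^{⊙(n−1)}`. -/
def kleene {n : ℕ} (A : Matrix (Fin n) (Fin n) Trop) : Matrix (Fin n) (Fin n) Trop :=
  fun i j => (Finset.range n).inf fun k => mpPow A k i j

/-- `p` is a directed path from `j` to `i` in the digraph with edge relation `E`
(`E a b` meaning there is an edge `a → b`), recorded as its list of vertices. -/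
def IsPathFrom {n : ℕ} (E : Fin n → Fin n → Prop) (j i : Fin n) (p : List (Fin n)) : Prop :=
  p.head? = some j ∧ p.getLast? = some i ∧ p.Chain' E

/-- A digraph is acyclic if the only paths from a vertex to itself are trivial. -/
def IsDAG {n : ℕ} (E : Fin n → Fin n → Prop) : Prop :=
  ∀ (j : Fin n) (p : List (Fin n)), IsPathFrom E j j p → p.length ≤ 1

/-- `C ∈ T^{n×n}` is supported on the digraph `E` : zero diagonal, and for `i ≠ j`
the entry `c_ij` is finite exactly when `j → i` is an edge. -/
def SupportedOn {n : ℕ} (C : Matrix (Fin n) (Fin n) Trop) (E : Fin n → Fin n → Prop) : Prop :=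
  (∀ i, C i i = 0) ∧ ∀ i j, i ≠ j → (C i j ≠ ⊤ ↔ E j i)

/-- The edge weight function of a weight matrix: `cw C a b = c_{ba}` is the weight of
the edge `a → b`. -/
def cw {n : ℕ} (C : Matrix (Fin n) (Fin n) Trop) : Fin n → Fin n → ℝ :=
  fun a b => WithTop.untopD 0 (C b a)

/-- Total weight of a path (sum of the weights of its consecutive edges). -/
def pathWeight {n : ℕ} (w : Fin n → Fin n → ℝ) (p : List (Fin n)) : ℝ :=
  ((p.zip p.tail).map fun q => w q.1 q.2).sum

/-- The edge `j → i` belongs to the weighted transitive reduction `G^♭_w`: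
the single edge is the unique minimum-weight directed path from `j` to `i`. -/
def InWTR {n : ℕ} (E : Fin n → Fin n → Prop) (w : Fin n → Fin n → ℝ) (j i : Fin n) : Prop :=
  E j i ∧ ∀ p : List (Fin n), IsPathFrom E j i p → p ≠ [j, i] → w j i < pathWeight w p

/-- Weighted digraph polyhedron `Q(C) = {x : x_i − x_j ≤ c_ij}` (as the saturated
subset of `ℝ^n` representing a subset of `ℝ^n/ℝ𝟙`). -/
def wdp {n : ℕ} (C : Matrix (Fin n) (Fin n) Trop) : Set (Fin n → ℝ) :=
  {x | ∀ i j, i ≠ j → ((x i - x j : ℝ) : Trop) ≤ C i j}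

/-- The tropical polyhedron generated by the columns of `V`: all min-plus linear
combinations `V ⊙ λ`, `λ ∈ ℝ^n` (as a saturated subset of `ℝ^d`). -/
def tconvM {d n : ℕ} (V : Matrix (Fin d) (Fin n) Trop) : Set (Fin d → ℝ) :=
  {x | ∃ lam : Fin n → ℝ, ∀ i, (x i : Trop) = Finset.univ.inf fun j => V i j + (lam j : Trop)}

/-- `v` is reachable from `s`. -/
def Reaches {n : ℕ} (E : Fin n → Fin n → Prop) (s v : Fin n) : Prop :=
  ∃ p, IsPathFrom E s v p

/-- Edges of the transitive closure `G*`: `j → i` with `i ≠ j` reachable from `j`. -/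
def EStar {n : ℕ} (E : Fin n → Fin n → Prop) (j i : Fin n) : Prop :=
  j ≠ i ∧ ∃ p, IsPathFrom E j i p

/-- The weight matrix `C^♭` of the weighted transitive reduction `(G^♭_w, w^♭)`. -/
def CflatM {n : ℕ} (E : Fin n → Fin n → Prop) (C : Matrix (Fin n) (Fin n) Trop) :
    Matrix (Fin n) (Fin n) Trop :=
  fun a b => if a = b then 0 else if InWTR E (cw C) b a then C a b else ⊤

/-!
For a DAG every entry of the shortest-path matrix `d` of `C` is the supremum of `x_i − x_j`
over `Q(C)`: points of `Q(C)` telescope along paths, and the minimum of the potential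
`d(j, ·)` with a shifted feasible potential is a point of `Q(C)` nearly attaining it. Hence `Q(C)`
determines `d`. An edge `j → i` lies in `G^♭_w` exactly when `d(j, i) < d(j, k) + d(k, i)` for
all `k ∉ {i, j}`, and then `c_ij = d(j, i)`, so `C^♭` is determined by `d` as well.
-/

open Finset

variable {n : ℕ} {E E' : Fin n → Fin n → Prop} {C C' : Matrix (Fin n) (Fin n) Trop}

section Paths

@[simp]
lemma pathWeight_singleton (w : Fin n → Fin n → ℝ) (a : Fin n) : pathWeight w [a] = 0 := by
  simp [pathWeight]

@[simp]
lemma pathWeight_cons_cons (w : Fin n → Fin n → ℝ) (a b : Fin n) (l : List (Fin n)) :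
    pathWeight w (a :: b :: l) = w a b + pathWeight w (b :: l) := by
  simp [pathWeight]

lemma pathWeight_append (w : Fin n → Fin n → ℝ) {k : Fin n} {p : List (Fin n)}
    (hp : p.getLast? = some k) (t : List (Fin n)) :
    pathWeight w (p ++ t) = pathWeight w p + pathWeight w (k :: t) := by
  induction p with
  | nil => simp at hp
  | cons a s ih =>
    cases s with
    | nil =>
      obtain rfl : a = k := by simpa using hp
      simp
    | cons b s =>
      rw [List.getLast?_cons_cons] at hp
      simp only [List.cons_append, pathWeight_cons_cons] at ih ⊢
      rw [ih hp, add_assoc]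

lemma isPathFrom_singleton (a : Fin n) : IsPathFrom E a a [a] :=
  ⟨rfl, rfl, List.isChain_singleton a⟩

lemma isPathFrom_cons_cons {j i b : Fin n} {t : List (Fin n)} :
    IsPathFrom E j i (j :: b :: t) ↔ E j b ∧ IsPathFrom E b i (b :: t) := by
  constructor
  · rintro ⟨-, hlast, hchain⟩
    exact ⟨(List.isChain_cons_cons.1 hchain).1, rfl, hlast, (List.isChain_cons_cons.1 hchain).2⟩
  · rintro ⟨hjb, -, hlast, hchain⟩
    exact ⟨rfl, hlast, List.isChain_cons_cons.2 ⟨hjb, hchain⟩⟩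

lemma isPathFrom_pair {j i : Fin n} (h : E j i) : IsPathFrom E j i [j, i] :=
  isPathFrom_cons_cons.2 ⟨h, isPathFrom_singleton i⟩

lemma IsPathFrom.exists_eq_cons {j i : Fin n} {p : List (Fin n)} (h : IsPathFrom E j i p) :
    ∃ t, p = j :: t := by
  obtain ⟨hhead, -, -⟩ := h
  cases p with
  | nil => simp at hhead
  | cons a t => exact ⟨t, by simpa using hhead⟩

lemma IsPathFrom.append {j k i : Fin n} {p t : List (Fin n)} (hp : IsPathFrom E j k p)
    (hq : IsPathFrom E k i (k :: t)) : IsPathFrom E j i (p ++ t) := by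
  obtain ⟨s, rfl⟩ := hp.exists_eq_cons
  induction s generalizing j with
  | nil =>
    obtain rfl : j = k := by simpa [IsPathFrom] using hp.2.1
    exact hq
  | cons b s ih =>
    obtain ⟨hjb, hb⟩ := isPathFrom_cons_cons.1 hp
    exact isPathFrom_cons_cons.2 ⟨hjb, ih hb⟩

lemma IsDAG.ne_of_edge (hdag : IsDAG E) {a b : Fin n} (h : E a b) : a ≠ b := by
  rintro rfl
  simpa using hdag a _ (isPathFrom_pair h)

lemma IsDAG.nodup_of_isChain (hdag : IsDAG E) {p : List (Fin n)} (hp : p.IsChain E) :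
    p.Nodup := by
  induction p with
  | nil => exact List.nodup_nil
  | cons a t ih =>
    refine List.nodup_cons.2 ⟨fun hmem => ?_, ih hp.tail⟩
    obtain ⟨s, s', rfl⟩ := List.append_of_mem hmem
    have hcycle : IsPathFrom E a a (a :: (s ++ [a])) :=
      ⟨rfl, by rw [← List.cons_append]; exact List.getLast?_concat, hp.prefix ⟨s', by simp⟩⟩
    simpa using hdag a _ hcycle

end Paths

section Distances

/-- In a DAG every path is simple, so this is the finite set of all paths from `j` to `i`. -/
def simplePaths (E : Fin n → Fin n → Prop) (j i : Fin n) : Finset (List (Fin n)) :=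
  (univ.map (Function.Embedding.subtype List.Nodup)).filter (IsPathFrom E j i)

/-- The shortest-path distance `d(j, i)` in `(G, w)`, `⊤` if `i` is not reachable from `j`. -/
def pathDist (E : Fin n → Fin n → Prop) (C : Matrix (Fin n) (Fin n) Trop) (j i : Fin n) :
    Trop :=
  (simplePaths E j i).inf fun p => ((pathWeight (cw C) p : ℝ) : Trop)

lemma pathDist_le_pathWeight (hdag : IsDAG E) {j i : Fin n} {p : List (Fin n)}
    (hp : IsPathFrom E j i p) : pathDist E C j i ≤ pathWeight (cw C) p :=
  inf_le (mem_filter.2 ⟨by simpa using hdag.nodup_of_isChain hp.2.2, hp⟩)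

lemma exists_pathDist_eq {j i : Fin n} (h : pathDist E C j i ≠ ⊤) :
    ∃ p, IsPathFrom E j i p ∧ pathDist E C j i = pathWeight (cw C) p := by
  obtain ⟨p, hp, hmin⟩ := exists_mem_eq_inf (simplePaths E j i)
    (nonempty_iff_ne_empty.2 fun he => h (by rw [pathDist, he, inf_empty]))
    fun p => ((pathWeight (cw C) p : ℝ) : Trop)
  exact ⟨p, (mem_filter.1 hp).2, hmin⟩

lemma pathDist_self_nonpos (hdag : IsDAG E) (j : Fin n) : pathDist E C j j ≤ 0 := by
  simpa using pathDist_le_pathWeight (C := C) hdag (isPathFrom_singleton j)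

lemma pathDist_le_cw (hdag : IsDAG E) {j i : Fin n} (h : E j i) :
    pathDist E C j i ≤ cw C j i := by
  simpa using pathDist_le_pathWeight (C := C) hdag (isPathFrom_pair h)

lemma pathDist_triangle (hdag : IsDAG E) (j k i : Fin n) :
    pathDist E C j i ≤ pathDist E C j k + pathDist E C k i := by
  by_cases hjk : pathDist E C j k = ⊤
  · simp [hjk]
  by_cases hki : pathDist E C k i = ⊤
  · simp [hki]
  obtain ⟨p, hp, hpw⟩ := exists_pathDist_eq hjk
  obtain ⟨q, hq, hqw⟩ := exists_pathDist_eq hki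
  obtain ⟨t, rfl⟩ := hq.exists_eq_cons
  calc pathDist E C j i ≤ pathWeight (cw C) (p ++ t) :=
        pathDist_le_pathWeight hdag (hp.append hq)
    _ = pathDist E C j k + pathDist E C k i := by
        rw [pathWeight_append _ hp.2.1, hpw, hqw, WithTop.coe_add]

lemma exists_pathDist_add_le (hdag : IsDAG E) {j i : Fin n} (hji : j ≠ i) {p : List (Fin n)}
    (hp : IsPathFrom E j i p) (hpair : p ≠ [j, i]) :
    ∃ k, k ≠ j ∧ k ≠ i ∧ pathDist E C j k + pathDist E C k i ≤ pathWeight (cw C) p := by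
  obtain ⟨_ | ⟨k, t⟩, rfl⟩ := hp.exists_eq_cons
  · exact absurd (by simpa [IsPathFrom] using hp.2.1) hji
  obtain ⟨hjk, hki⟩ := isPathFrom_cons_cons.1 hp
  have hk_ne_i : k ≠ i := by
    rintro rfl
    have : t = [] := by simpa using hdag k _ hki
    exact hpair (by rw [this])
  refine ⟨k, (hdag.ne_of_edge hjk).symm, hk_ne_i, ?_⟩
  rw [pathWeight_cons_cons, WithTop.coe_add]
  exact add_le_add (pathDist_le_cw hdag hjk) (pathDist_le_pathWeight hdag hki)

end Distances

section Reduction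

lemma pathDist_eq_cw_of_inWTR (hdag : IsDAG E) {j i : Fin n} (h : InWTR E (cw C) j i) :
    pathDist E C j i = cw C j i := by
  refine le_antisymm (pathDist_le_cw hdag h.1) (Finset.le_inf fun p hp => ?_)
  have hp := (mem_filter.1 hp).2
  by_cases hpair : p = [j, i]
  · simp [hpair]
  · exact_mod_cast (h.2 p hp hpair).le

lemma inWTR_iff_pathDist (hdag : IsDAG E) (j i : Fin n) :
    InWTR E (cw C) j i ↔ j ≠ i ∧ pathDist E C j i ≠ ⊤ ∧
      ∀ k, k ≠ j → k ≠ i → pathDist E C j i < pathDist E C j k + pathDist E C k i := by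
  constructor
  · intro h
    have hdist := pathDist_eq_cw_of_inWTR hdag h
    refine ⟨hdag.ne_of_edge h.1, by simp [hdist], fun k hkj hki => ?_⟩
    by_cases hsum : pathDist E C j k + pathDist E C k i = ⊤
    · simp [hdist, hsum]
    obtain ⟨hjk, hki'⟩ := WithTop.add_ne_top.1 hsum
    obtain ⟨p, hp, hpw⟩ := exists_pathDist_eq hjk
    obtain ⟨q, hq, hqw⟩ := exists_pathDist_eq hki'
    obtain ⟨t, rfl⟩ := hq.exists_eq_cons
    have hk_mem : k ∈ p ++ t := List.mem_append_left _ (List.mem_of_getLast? hp.2.1)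
    have hpair : p ++ t ≠ [j, i] := by
      intro he
      simp [he, hkj, hki] at hk_mem
    have hlt := h.2 _ (hp.append hq) hpair
    rw [pathWeight_append _ hp.2.1] at hlt
    rw [hdist, hpw, hqw]
    exact_mod_cast hlt
  · rintro ⟨hji, hfin, hstrict⟩
    have hshort : ∀ p, IsPathFrom E j i p → p ≠ [j, i] →
        pathDist E C j i < pathWeight (cw C) p := fun p hp hpair => by
      obtain ⟨k, hkj, hki, hk⟩ := exists_pathDist_add_le hdag hji hp hpair
      exact (hstrict k hkj hki).trans_le hk
    obtain ⟨p, hp, hpw⟩ := exists_pathDist_eq hfin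
    obtain rfl : p = [j, i] := by
      by_contra hpair
      exact (hshort p hp hpair).ne hpw
    have hdist : pathDist E C j i = cw C j i := by simpa using hpw
    refine ⟨(isPathFrom_cons_cons.1 hp).1, fun q hq hpair => ?_⟩
    have := hshort q hq hpair
    rw [hdist] at this
    exact_mod_cast this

end Reduction

section Potentials

/-- `y ≤ C ⊙ y` in `T^n`; for real `y` this is `y ∈ Q(C)`. -/
def IsPotential (C : Matrix (Fin n) (Fin n) Trop) (y : Fin n → Trop) : Prop :=
  ∀ i j, y i ≤ y j + C i j

lemma IsPotential.inf {y z : Fin n → Trop} (hy : IsPotential C y) (hz : IsPotential C z) :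
    IsPotential C (y ⊓ z) := fun i j => by
  simpa only [Pi.inf_apply, min_add_add_right] using inf_le_inf (hy i j) (hz i j)

lemma IsPotential.add_const {y : Fin n → Trop} (hy : IsPotential C y) (c : Trop) :
    IsPotential C fun v => y v + c := fun i j => by
  simpa only [add_right_comm _ c] using add_le_add_left (hy i j) c

lemma IsPotential.finset_inf {ι : Type*} (s : Finset ι) {y : ι → Fin n → Trop}
    (hy : ∀ u ∈ s, IsPotential C (y u)) : IsPotential C fun v => s.inf fun u => y u v := by
  induction s using Finset.induction_on with
  | empty => exact fun i j => by simp
  | insert u s _ ih =>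
    simp only [inf_insert]
    exact (hy u (mem_insert_self u s)).inf (ih fun v hv => hy v (mem_insert_of_mem hv))

lemma isPotential_coe_iff (hdiag : ∀ i, C i i = 0) {x : Fin n → ℝ} :
    IsPotential C (fun v => (x v : Trop)) ↔ x ∈ wdp C := by
  refine forall₂_congr fun i j => ?_
  by_cases hij : i = j
  · simp [hij, hdiag]
  rw [imp_iff_right hij]
  induction C i j using WithTop.recTopCoe with
  | top => simp
  | coe c => simp only [← WithTop.coe_add, WithTop.coe_le_coe, sub_le_iff_le_add']

lemma coe_cw_of_edge (hsupp : SupportedOn C E) {a b : Fin n} (h : E a b) :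
    ((cw C a b : ℝ) : Trop) = C b a := by
  by_cases hab : b = a
  · simp [cw, hab, hsupp.1]
  obtain ⟨c, hc⟩ := WithTop.ne_top_iff_exists.1 ((hsupp.2 b a hab).2 h)
  simp [cw, ← hc]

lemma IsPotential.le_add_pathWeight (hsupp : SupportedOn C E) {y : Fin n → Trop}
    (hy : IsPotential C y) {j i : Fin n} {p : List (Fin n)} (hp : IsPathFrom E j i p) :
    y i ≤ y j + pathWeight (cw C) p := by
  obtain ⟨t, rfl⟩ := hp.exists_eq_cons
  induction t generalizing j with
  | nil =>
    obtain rfl : j = i := by simpa [IsPathFrom] using hp.2.1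
    simp
  | cons k t ih =>
    obtain ⟨hjk, hki⟩ := isPathFrom_cons_cons.1 hp
    calc y i ≤ y k + pathWeight (cw C) (k :: t) := ih hki
      _ ≤ y j + C k j + pathWeight (cw C) (k :: t) := add_le_add_left (hy k j) _
      _ = y j + pathWeight (cw C) (j :: k :: t) := by
        rw [pathWeight_cons_cons, WithTop.coe_add, coe_cw_of_edge hsupp hjk, add_assoc]

lemma IsPotential.le_add_pathDist (hsupp : SupportedOn C E) {y : Fin n → Trop}
    (hy : IsPotential C y) (i j : Fin n) : y i ≤ y j + pathDist E C j i := by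
  by_cases hfin : pathDist E C j i = ⊤
  · simp [hfin]
  obtain ⟨p, hp, hpw⟩ := exists_pathDist_eq hfin
  rw [hpw]
  exact hy.le_add_pathWeight hsupp hp

lemma isPotential_pathDist (hdag : IsDAG E) (hsupp : SupportedOn C E) (j₀ : Fin n) :
    IsPotential C (pathDist E C j₀) := fun i j => by
  by_cases hij : i = j
  · simp [hij, hsupp.1]
  by_cases hC : C i j = ⊤
  · simp [hC]
  have hji : E j i := (hsupp.2 i j hij).1 hC
  calc pathDist E C j₀ i ≤ pathDist E C j₀ j + pathDist E C j i := pathDist_triangle hdag _ _ _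
    _ ≤ pathDist E C j₀ j + C i j := by
      rw [← coe_cw_of_edge hsupp hji]
      exact add_le_add_right (pathDist_le_cw hdag hji) _

lemma exists_mem_wdp_lt_sub (hdag : IsDAG E) (hsupp : SupportedOn C E) {j i : Fin n} {r : ℝ}
    (hr : (r : Trop) < pathDist E C j i) : ∃ x ∈ wdp C, x j ≤ 0 ∧ r < x i := by
  set b : Fin n → Trop := fun v => univ.inf fun u => pathDist E C u v
  have hb_le : ∀ v, b v ≤ 0 := fun v =>
    (inf_le (mem_univ v)).trans (pathDist_self_nonpos hdag v)
  obtain ⟨β, hβ⟩ := WithTop.ne_top_iff_exists.1 ((hb_le i).trans_lt (WithTop.coe_lt_top 0)).ne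
  -- shifting `b` up by `K` makes it irrelevant at `i` without affecting `x j ≤ 0`
  set K : ℝ := r - β + 1
  set y : Fin n → Trop := pathDist E C j ⊓ fun v => b v + K
  have hy : IsPotential C y := (isPotential_pathDist hdag hsupp j).inf
    ((IsPotential.finset_inf univ fun u _ => isPotential_pathDist hdag hsupp u).add_const _)
  have hy_fin : ∀ v, ∃ a : ℝ, (a : Trop) = y v := fun v => WithTop.ne_top_iff_exists.1
    ((inf_le_right.trans (add_le_add_left (hb_le v) _)).trans_lt (WithTop.coe_lt_top _)).ne
  choose x hx using hy_fin
  refine ⟨x, (isPotential_coe_iff hsupp.1).1 (by simpa only [hx] using hy), ?_, ?_⟩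
  · exact_mod_cast (hx j).trans_le (inf_le_left.trans (pathDist_self_nonpos hdag j))
  · have hK : (r : Trop) < b i + K := by rw [← hβ]; exact_mod_cast (by linarith : r < β + K)
    exact_mod_cast (lt_inf_iff.2 ⟨hr, hK⟩).trans_eq (hx i).symm

lemma pathDist_le_of_wdp_subset (hdag : IsDAG E) (hsupp : SupportedOn C E)
    (hsupp' : SupportedOn C' E') (hsub : wdp C ⊆ wdp C') (j i : Fin n) :
    pathDist E C j i ≤ pathDist E' C' j i := by
  by_contra! hlt
  obtain ⟨r, hr⟩ := WithTop.ne_top_iff_exists.1 hlt.ne_top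
  obtain ⟨x, hx, hxj, hxi⟩ := exists_mem_wdp_lt_sub hdag hsupp (hr ▸ hlt)
  have hbound := ((isPotential_coe_iff hsupp'.1).2 (hsub hx)).le_add_pathDist hsupp' i j
  rw [← hr] at hbound
  have : x i ≤ x j + r := by exact_mod_cast hbound
  linarith

end Potentials

/-- If `C`, `C'` are supported on DAGs `G`, `G'` on the same node set
and `Q(C) = Q(C')`, then the weighted transitive reductions coincide:
`G^♭_w = (G')^♭_{w'}` with equal weights, i.e. `C^♭ = (C')^♭`. -/
theorem stmt10 {n : ℕ} (E E' : Fin n → Fin n → Prop)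
    (C C' : Matrix (Fin n) (Fin n) Trop)
    (hdag : IsDAG E) (hdag' : IsDAG E')
    (hsupp : SupportedOn C E) (hsupp' : SupportedOn C' E')
    (hQ : wdp C = wdp C') :
    (∀ j i, InWTR E (cw C) j i ↔ InWTR E' (cw C') j i) ∧
    CflatM E C = CflatM E' C' := by
  have hdist : pathDist E C = pathDist E' C' := funext₂ fun j i =>
    le_antisymm (pathDist_le_of_wdp_subset hdag hsupp hsupp' hQ.subset j i)
      (pathDist_le_of_wdp_subset hdag' hsupp' hsupp hQ.superset j i)
  have hwtr : ∀ j i, InWTR E (cw C) j i ↔ InWTR E' (cw C') j i := fun j i => by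
    rw [inWTR_iff_pathDist hdag, inWTR_iff_pathDist hdag', hdist]
  refine ⟨hwtr, funext₂ fun a b => ?_⟩
  simp only [CflatM, hwtr b a]
  split_ifs with hab hw
  · rfl
  · have hw₀ := (hwtr b a).2 hw
    rw [← coe_cw_of_edge hsupp hw₀.1, ← coe_cw_of_edge hsupp' hw.1,
      ← pathDist_eq_cw_of_inWTR hdag hw₀, ← pathDist_eq_cw_of_inWTR hdag' hw, hdist]
  · rfl
end
end

section
/- Let V ∈ T^{d×n} be doubly ℝ-astic with columns v^{(1)}, …, v^{(n)}. A point x ∈ ℝ^d/ℝ𝟙 lies in the tropical polyhedron tconv(V) if and only if for every coordinate i ∈ [d] there exists j ∈ [n] with v_i^{(j)} < ∞ and x_i − v_i^{(j)} ≥ x_k − v_k^{(j)} for every k ∈ [d] with v_k^{(j)} < ∞; i.e., tconv(V) is the union of the closed covector cells whose covector has an incoming and an outgoing edge at every node. -/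
/-!
If `x = V ⊙ λ`, then for every `i` a column `j` attaining the minimum in row `i` gives
`x ≤ v^{(j)} ⊙ λ_j` with equality at `i`, which says exactly that `x ∈ S_i(v^{(j)})`.
Conversely, the principal solution `λ_j = max {x_k − v_kj : v_kj < ∞}` always satisfies
`x ≤ V ⊙ λ`, and if `x ∈ S_i(v^{(j)})` then `λ_j = x_i − v_ij`, so equality holds at `i`.
-/

open scoped Classical
noncomputable section

/-- `V` is doubly ℝ-astic: every row and every column has a finite entry. -/
def DoublyRAstic {d n : ℕ} (V : Matrix (Fin d) (Fin n) Trop) : Prop :=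
  (∀ i, ∃ j, V i j ≠ ⊤) ∧ (∀ j, ∃ i, V i j ≠ ⊤)
namespace Trop

variable {ι : Type*}

/-- The `i`-th closed max-sector `S_i(v)` of the tropical hyperplane with apex `v`. -/
def InMaxSector (v : ι → Trop) (x : ι → ℝ) (i : ι) : Prop :=
  v i ≠ ⊤ ∧ ∀ k, v k ≠ ⊤ → x k - (v k).untopD 0 ≤ x i - (v i).untopD 0

theorem coe_le_add_coe_iff {v : Trop} {x c : ℝ} :
    (x : Trop) ≤ v + c ↔ (v ≠ ⊤ → x - v.untopD 0 ≤ c) := by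
  cases v using WithTop.recTopCoe with
  | top => simp
  | coe a =>
    rw [← WithTop.coe_add, WithTop.coe_le_coe, WithTop.untopD_coe]
    simp only [ne_eq, WithTop.coe_ne_top, not_false_eq_true, forall_const]
    constructor <;> intro h <;> linarith

theorem coe_eq_add_coe_iff {v : Trop} {x c : ℝ} :
    (x : Trop) = v + c ↔ v ≠ ⊤ ∧ x - v.untopD 0 = c := by
  cases v using WithTop.recTopCoe with
  | top => simp
  | coe a =>
    rw [← WithTop.coe_add, WithTop.coe_inj, WithTop.untopD_coe]
    simp only [ne_eq, WithTop.coe_ne_top, not_false_eq_true, true_and]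
    constructor <;> intro h <;> linarith

theorem inMaxSector_iff_exists_coe_le_add {v : ι → Trop} {x : ι → ℝ} {i : ι} :
    InMaxSector v x i ↔ ∃ c : ℝ, (∀ k, (x k : Trop) ≤ v k + c) ∧ (x i : Trop) = v i + c := by
  simp only [coe_le_add_coe_iff, coe_eq_add_coe_iff]
  constructor
  · rintro ⟨hi, hsector⟩
    exact ⟨_, hsector, hi, rfl⟩
  · rintro ⟨c, hdom, hi, rfl⟩
    exact ⟨hi, hdom⟩

/-- The least `c` with `x ≤ v ⊙ c`; when `v` has no finite entry it takes the junk value `0`. -/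
def principalSolution (v : ι → Trop) (x : ι → ℝ) : ℝ :=
  ⨆ k : {k // v k ≠ ⊤}, x k - (v k).untopD 0

theorem principalSolution_le {v : ι → Trop} {x : ι → ℝ} {c : ℝ} (hv : ∃ k, v k ≠ ⊤)
    (h : ∀ k, (x k : Trop) ≤ v k + c) : principalSolution v x ≤ c :=
  have : Nonempty {k // v k ≠ ⊤} := let ⟨k, hk⟩ := hv; ⟨⟨k, hk⟩⟩
  ciSup_le fun k => coe_le_add_coe_iff.1 (h k) k.2

variable [Finite ι]

theorem coe_le_add_principalSolution (v : ι → Trop) (x : ι → ℝ) (k : ι) :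
    (x k : Trop) ≤ v k + principalSolution v x :=
  coe_le_add_coe_iff.2 fun hk =>
    le_ciSup (f := fun k : {k // v k ≠ ⊤} => x k - (v k).untopD 0)
      (Set.finite_range _).bddAbove ⟨k, hk⟩

end Trop

open Trop Matrix

theorem stmt17_general {d n : ℕ} (V : Matrix (Fin d) (Fin n) Trop) (x : Fin d → ℝ) :
    x ∈ tconvM V ↔
      ∀ i : Fin d, ∃ j : Fin n, V i j ≠ ⊤ ∧
        ∀ k : Fin d, V k j ≠ ⊤ →
          x k - WithTop.untopD 0 (V k j) ≤ x i - WithTop.untopD 0 (V i j) := by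
  change _ ↔ ∀ i, ∃ j, InMaxSector (Vᵀ j) x i
  constructor
  · rintro ⟨lam, hlam⟩ i
    have hne : (Finset.univ : Finset (Fin n)).Nonempty :=
      Finset.nonempty_iff_ne_empty.2 fun h => by simpa [h] using hlam i
    obtain ⟨j, -, hj⟩ := Finset.exists_mem_eq_inf _ hne fun j => V i j + (lam j : Trop)
    exact ⟨j, inMaxSector_iff_exists_coe_le_add.2
      ⟨lam j, fun k => (hlam k).trans_le (Finset.inf_le (Finset.mem_univ j)), (hlam i).trans hj⟩⟩
  · intro hsector
    choose j hj using hsector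
    refine ⟨fun j => principalSolution (Vᵀ j) x, fun i => le_antisymm ?_ ?_⟩
    · exact Finset.le_inf fun j _ => coe_le_add_principalSolution (Vᵀ j) x i
    · obtain ⟨c, hdom, hi⟩ := inMaxSector_iff_exists_coe_le_add.1 (hj i)
      calc Finset.univ.inf (fun j => V i j + (principalSolution (Vᵀ j) x : Trop))
          ≤ V i (j i) + (principalSolution (Vᵀ (j i)) x : Trop) := Finset.inf_le (Finset.mem_univ _)
        _ ≤ V i (j i) + c := by
          gcongr
          exact_mod_cast principalSolution_le ⟨i, (hj i).1⟩ hdom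
        _ = x i := hi.symm

/-- For doubly ℝ-astic `V`, a point `x` lies in `tconv(V)` iff for
every coordinate `i` there is a generator `v^{(j)}` with `v_i^{(j)} < ∞` such that `x`
lies in the `i`-th closed sector of the tropical hyperplane with apex `v^{(j)}`, i.e.
`x_i − v_i^{(j)} ≥ x_k − v_k^{(j)}` for every `k` with `v_k^{(j)} < ∞`. -/
theorem stmt17 {d n : ℕ} (V : Matrix (Fin d) (Fin n) Trop) (hV : DoublyRAstic V)
    (x : Fin d → ℝ) :
    x ∈ tconvM V ↔
      ∀ i : Fin d, ∃ j : Fin n, V i j ≠ ⊤ ∧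
        ∀ k : Fin d, V k j ≠ ⊤ →
          x k - WithTop.untopD 0 (V k j) ≤ x i - WithTop.untopD 0 (V i j) :=
  stmt17_general V x
end
end
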